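/- arXiv:1509.02627 — 8 statements merged into one kernel-verified Lean document; each statement's English description precedes it below -/
import Mathlib

section
/- Let P be a finite set of points in the plane and let θ be any real number. The rectilinear convex hull RCH_θ(P) is ortho-convex with respect to the rotated axes: for every x₀ ∈ ℝ², the intersection of RCH_θ(P) with the line {x₀ + t·w_θ : t ∈ ℝ} is a preconnected set, and likewise the intersection of RCH_θ(P) with the line {x₀ + t·w_{θ+π/2} : t ∈ ℝ} is preconnected. -/
open scoped RealInnerProductSpace

noncomputable section

/-- The Euclidean plane. -/
abbrev Plane := EuclideanSpace ℝ (Fin 2)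

/-- The unit vector `w_θ = (cos θ, sin θ)`. -/
def wdir (θ : ℝ) : Plane := WithLp.toLp 2 ![Real.cos θ, Real.sin θ]

/-- The open θ-quadrant of type `i` with apex `x`. -/
def openQuad (θ : ℝ) (i : Fin 4) (x : Plane) : Set Plane :=
  {z | 0 < ⟪z - x, wdir (θ + (i : ℕ) * (Real.pi / 2))⟫ ∧
       0 < ⟪z - x, wdir (θ + ((i : ℕ) + 1) * (Real.pi / 2))⟫}

/-- The rectilinear convex hull of `P` with orientation `θ`. -/
def RCH (θ : ℝ) (P : Set Plane) : Set Plane :=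
  Set.univ \ ⋃ (x : Plane) (i : Fin 4) (_ : openQuad θ i x ∩ P = ∅), openQuad θ i x

/-! A line parallel to a rotated axis is orthogonal to one of the two directions bounding any
θ-quadrant, so it meets the quadrant in a ray (or in nothing, or in the whole line). Along the
line, RCH is therefore an intersection of complements of rays, which is an interval. -/

open Real Set

theorem isPreconnected_inter_line {E : Type*} [AddCommGroup E] [Module ℝ E] [TopologicalSpace E]
    [ContinuousAdd E] [ContinuousSMul ℝ E] (S : Set E) (x₀ d : E)
    (h : ((fun t : ℝ => x₀ + t • d) ⁻¹' S).OrdConnected) :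
    IsPreconnected (S ∩ {z | ∃ t : ℝ, z = x₀ + t • d}) := by
  have hline : {z | ∃ t : ℝ, z = x₀ + t • d} = range (fun t : ℝ => x₀ + t • d) := by
    ext z
    simp [eq_comm]
  rw [hline, inter_comm, ← image_preimage_eq_range_inter]
  exact h.isPreconnected.image _ (by fun_prop)

theorem isUpperSet_or_isLowerSet_setOf_pos_and_pos {a b p q : ℝ} (h : p * q = 0) :
    IsUpperSet {t : ℝ | 0 < a + t * p ∧ 0 < b + t * q} ∨
      IsLowerSet {t : ℝ | 0 < a + t * p ∧ 0 < b + t * q} := by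
  rcases mul_eq_zero.1 h with rfl | rfl
  · rcases le_total 0 q with hq | hq
    · exact .inl fun s t hst hs => ⟨by simpa using hs.1, by nlinarith [hs.2]⟩
    · exact .inr fun s t hst hs => ⟨by simpa using hs.1, by nlinarith [hs.2]⟩
  · rcases le_total 0 p with hp | hp
    · exact .inl fun s t hst hs => ⟨by nlinarith [hs.1], by simpa using hs.2⟩
    · exact .inr fun s t hst hs => ⟨by nlinarith [hs.1], by simpa using hs.2⟩

theorem isUpperSet_or_isLowerSet_setOf_inner_pos {E : Type*} [NormedAddCommGroup E]
    [InnerProductSpace ℝ E] {x₀ d x u v : E} (h : ⟪d, u⟫ * ⟪d, v⟫ = 0) :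
    IsUpperSet {t : ℝ | 0 < ⟪x₀ + t • d - x, u⟫ ∧ 0 < ⟪x₀ + t • d - x, v⟫} ∨
      IsLowerSet {t : ℝ | 0 < ⟪x₀ + t • d - x, u⟫ ∧ 0 < ⟪x₀ + t • d - x, v⟫} := by
  have hinner (t : ℝ) (w : E) : ⟪x₀ + t • d - x, w⟫ = ⟪x₀ - x, w⟫ + t * ⟪d, w⟫ := by
    rw [add_sub_right_comm, inner_add_left, real_inner_smul_left]
  simp_rw [hinner]
  exact isUpperSet_or_isLowerSet_setOf_pos_and_pos h

theorem inner_wdir (a b : ℝ) : ⟪wdir a, wdir b⟫ = cos (a - b) := by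
  simp only [wdir, PiLp.inner_apply, RCLike.inner_apply, ringHom_apply, Fin.sum_univ_two,
    Matrix.cons_val_zero, Matrix.cons_val_one, cos_sub]
  ring

theorem cos_mul_sin_int_mul_pi_div_two (m : ℤ) : cos (m * (π / 2)) * sin (m * (π / 2)) = 0 := by
  have h := sin_two_mul (m * (π / 2))
  rw [show 2 * (m * (π / 2)) = m * π by ring, sin_int_mul_pi] at h
  linarith

theorem inner_wdir_mul_inner_wdir_eq_zero (θ : ℝ) (k : ℤ) (i : ℕ) :
    ⟪wdir (θ + k * (π / 2)), wdir (θ + i * (π / 2))⟫ *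
      ⟪wdir (θ + k * (π / 2)), wdir (θ + (i + 1) * (π / 2))⟫ = 0 := by
  rw [inner_wdir, inner_wdir]
  have h := cos_mul_sin_int_mul_pi_div_two (k - i)
  rw [← cos_sub_pi_div_two] at h
  push_cast at h
  convert h using 3 <;> ring

theorem isPreconnected_RCH_inter_line (P : Set Plane) (θ : ℝ) (k : ℤ) (x₀ : Plane) :
    IsPreconnected (RCH θ P ∩ {z | ∃ t : ℝ, z = x₀ + t • wdir (θ + k * (π / 2))}) := by
  apply isPreconnected_inter_line
  have hpre : (fun t : ℝ => x₀ + t • wdir (θ + k * (π / 2))) ⁻¹' RCH θ P =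
      ⋂ (x : Plane) (i : Fin 4) (_ : openQuad θ i x ∩ P = ∅),
        ((fun t : ℝ => x₀ + t • wdir (θ + k * (π / 2))) ⁻¹' openQuad θ i x)ᶜ := by
    ext t
    simp [RCH]
  rw [hpre]
  refine ordConnected_iInter fun x => ordConnected_iInter fun i => ordConnected_iInter fun _ => ?_
  rcases isUpperSet_or_isLowerSet_setOf_inner_pos (x₀ := x₀) (x := x)
    (inner_wdir_mul_inner_wdir_eq_zero θ k i) with h | h
  exacts [h.compl.ordConnected, h.compl.ordConnected]

theorem rch_orthoConvex_general (P : Set Plane) (θ : ℝ) (x₀ : Plane) :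
    IsPreconnected (RCH θ P ∩ {z | ∃ t : ℝ, z = x₀ + t • wdir θ}) ∧
    IsPreconnected (RCH θ P ∩ {z | ∃ t : ℝ, z = x₀ + t • wdir (θ + Real.pi / 2)}) :=
  ⟨by simpa using isPreconnected_RCH_inter_line P θ 0 x₀,
    by simpa using isPreconnected_RCH_inter_line P θ 1 x₀⟩

/-- The rectilinear convex hull is ortho-convex with respect to the rotated axes: its
intersection with any line parallel to the rotated x-axis or the rotated y-axis is
preconnected. -/
theorem rch_orthoConvex (P : Set Plane) (hP : P.Finite) (θ : ℝ) (x₀ : Plane) :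
    IsPreconnected (RCH θ P ∩ {z | ∃ t : ℝ, z = x₀ + t • wdir θ}) ∧
    IsPreconnected (RCH θ P ∩ {z | ∃ t : ℝ, z = x₀ + t • wdir (θ + Real.pi / 2)}) :=
  rch_orthoConvex_general P θ x₀
end
end

section
/- Let P be a finite set of points in the plane, θ ∈ ℝ and x ∈ ℝ². Then x belongs to RCH_θ(P) if and only if for every i ∈ {0,1,2,3} the closed θ-quadrant of type i with apex x contains at least one point of P. -/
open scoped RealInnerProductSpace

noncomputable section

/-- The closed θ-quadrant of type `i` with apex `x`. -/
def closedQuad (θ : ℝ) (i : Fin 4) (x : Plane) : Set Plane :=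
  {z | 0 ≤ ⟪z - x, wdir (θ + (i : ℕ) * (Real.pi / 2))⟫ ∧
       0 ≤ ⟪z - x, wdir (θ + ((i : ℕ) + 1) * (Real.pi / 2))⟫}

/-!
A closed quadrant with apex `x` lies inside every open quadrant of the same type containing `x`,
so if it meets `P` then `x` is in no `P`-free open quadrant. Conversely, if the closed quadrant
misses the finite set `P`, then moving its apex back by a small amount along the diagonal
`w_{θ+iπ/2} + w_{θ+(i+1)π/2}` gives a `P`-free open quadrant that contains `x`.
-/

open Filter Topology

lemma inner_wdir_s2 (α β : ℝ) : ⟪wdir α, wdir β⟫ = Real.cos (α - β) := by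
  simp only [wdir, PiLp.inner_apply, RCLike.inner_apply, conj_trivial, Fin.sum_univ_two,
    Matrix.cons_val_zero, Matrix.cons_val_one, Real.cos_sub]
  ring

lemma inner_wdir_self (α : ℝ) : ⟪wdir α, wdir α⟫ = 1 := by
  rw [inner_wdir_s2, sub_self, Real.cos_zero]

lemma inner_wdir_add_pi_div_two (α : ℝ) : ⟪wdir α, wdir (α + Real.pi / 2)⟫ = 0 := by
  rw [inner_wdir_s2, sub_add_cancel_left, Real.cos_neg, Real.cos_pi_div_two]

lemma inner_wdir_add_pi_div_two_left (α : ℝ) : ⟪wdir (α + Real.pi / 2), wdir α⟫ = 0 := by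
  rw [real_inner_comm, inner_wdir_add_pi_div_two]

def quadDiag (θ : ℝ) (i : Fin 4) : Plane :=
  wdir (θ + (i : ℕ) * (Real.pi / 2)) + wdir (θ + ((i : ℕ) + 1) * (Real.pi / 2))

section Quadrants

variable {θ : ℝ} {i : Fin 4} {x y z : Plane}

lemma mem_openQuad_sub_smul_quadDiag_iff (ε : ℝ) :
    z ∈ openQuad θ i (x - ε • quadDiag θ i) ↔
      0 < ⟪z - x, wdir (θ + (i : ℕ) * (Real.pi / 2))⟫ + ε ∧
      0 < ⟪z - x, wdir (θ + ((i : ℕ) + 1) * (Real.pi / 2))⟫ + ε := by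
  have hβ : θ + ((i : ℕ) + 1) * (Real.pi / 2) = θ + (i : ℕ) * (Real.pi / 2) + Real.pi / 2 := by
    ring
  have hz : z - (x - ε • quadDiag θ i) = (z - x) + ε • quadDiag θ i := by abel
  simp only [openQuad, Set.mem_ofPred_eq]
  rw [hz, quadDiag, hβ]
  simp only [inner_add_left, real_inner_smul_left, inner_wdir_self, inner_wdir_add_pi_div_two,
    inner_wdir_add_pi_div_two_left, add_zero, zero_add, mul_one]

lemma self_mem_openQuad_sub_smul_quadDiag {ε : ℝ} (hε : 0 < ε) :
    x ∈ openQuad θ i (x - ε • quadDiag θ i) := by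
  simp [mem_openQuad_sub_smul_quadDiag_iff, hε]

lemma eventually_notMem_openQuad_sub_smul_quadDiag (hz : z ∉ closedQuad θ i x) :
    ∀ᶠ ε in 𝓝 (0 : ℝ), z ∉ openQuad θ i (x - ε • quadDiag θ i) := by
  simp only [closedQuad, Set.mem_ofPred_eq, not_and_or, not_le] at hz
  rcases hz with hz | hz
  · filter_upwards [eventually_lt_nhds (neg_pos.mpr hz)] with ε hε
    rw [mem_openQuad_sub_smul_quadDiag_iff]
    exact fun h => by linarith [h.1]
  · filter_upwards [eventually_lt_nhds (neg_pos.mpr hz)] with ε hε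
    rw [mem_openQuad_sub_smul_quadDiag_iff]
    exact fun h => by linarith [h.2]

lemma closedQuad_subset_openQuad (hx : x ∈ openQuad θ i y) : closedQuad θ i x ⊆ openQuad θ i y := by
  rintro z ⟨hz₁, hz₂⟩
  have hzy : z - y = (z - x) + (x - y) := by abel
  constructor
  · rw [hzy, inner_add_left]; linarith [hx.1]
  · rw [hzy, inner_add_left]; linarith [hx.2]

lemma exists_free_openQuad_mem_of_closedQuad_inter_eq_empty {P : Set Plane} (hP : P.Finite)
    (h : closedQuad θ i x ∩ P = ∅) : ∃ y, openQuad θ i y ∩ P = ∅ ∧ x ∈ openQuad θ i y := by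
  have hfree : ∀ᶠ ε in 𝓝[>] (0 : ℝ), ∀ p ∈ P, p ∉ openQuad θ i (x - ε • quadDiag θ i) := by
    refine hP.eventually_all.mpr fun p hp => ?_
    exact nhdsWithin_le_nhds
      (eventually_notMem_openQuad_sub_smul_quadDiag fun hpx => h.subset ⟨hpx, hp⟩)
  obtain ⟨ε, hε, hεpos⟩ := (hfree.and self_mem_nhdsWithin).exists
  exact ⟨_, Set.eq_empty_of_forall_notMem fun p hp => hε p hp.2 hp.1,
    self_mem_openQuad_sub_smul_quadDiag hεpos⟩

end Quadrants

lemma mem_RCH_iff_forall_free_openQuad {θ : ℝ} {P : Set Plane} {x : Plane} :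
    x ∈ RCH θ P ↔ ∀ y i, openQuad θ i y ∩ P = ∅ → x ∉ openQuad θ i y := by
  simp [RCH]

/-- A point belongs to the rectilinear convex hull iff each of the four closed
θ-quadrants with apex at that point contains a point of `P`. -/
theorem mem_rch_iff (P : Set Plane) (hP : P.Finite) (θ : ℝ) (x : Plane) :
    x ∈ RCH θ P ↔ ∀ i : Fin 4, (closedQuad θ i x ∩ P).Nonempty := by
  rw [mem_RCH_iff_forall_free_openQuad]
  constructor
  · intro hx i
    by_contra hempty
    obtain ⟨y, hfree, hxy⟩ :=
      exists_free_openQuad_mem_of_closedQuad_inter_eq_empty hP (Set.not_nonempty_iff_eq_empty.mp hempty)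
    exact hx y i hfree hxy
  · rintro h y i hfree hxy
    obtain ⟨p, hpx, hpP⟩ := h i
    exact hfree.subset ⟨closedQuad_subset_openQuad hxy hpx, hpP⟩
end
end

section
/- Let P be a finite set of points in the plane, θ ∈ ℝ, and let x, y ∈ ℝ² be such that the first (type 0) open θ-quadrant Q₀ with apex x and the third (type 2) open θ-quadrant Q₂ with apex y are both P-free and overlap, i.e. ⟨y − x, w_θ⟩ > 0 and ⟨y − x, w_{θ+π/2}⟩ > 0. Suppose moreover that P contains a point p with ⟨p, w_θ⟩ ≤ ⟨x, w_θ⟩ and ⟨p, w_{θ+π/2}⟩ ≥ ⟨y, w_{θ+π/2}⟩, and a point q with ⟨q, w_θ⟩ ≥ ⟨y, w_θ⟩ and ⟨q, w_{θ+π/2}⟩ ≤ ⟨x, w_{θ+π/2}⟩. Then RCH_θ(P) is not preconnected (the rectilinear convex hull is disconnected). -/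
/-!
Since `⟪x, w_{θ+π/2}⟫ < ⟪y, w_{θ+π/2}⟫`, every point `z` of the open strip
`⟪x, w_θ⟫ < ⟪z, w_θ⟫ < ⟪y, w_θ⟫` lies in `Q₀(x)` or in `Q₂(y)`, so the hull misses the strip.
The points `p` and `q` of the hull lie on either side of it, hence the image of the hull under
`z ↦ ⟪z, w_θ⟫` is not an interval, which it would be if the hull were preconnected.
-/

open scoped RealInnerProductSpace

noncomputable section

open Set

lemma wdir_add_pi (α : ℝ) : wdir (α + Real.pi) = -wdir α := by
  ext i
  fin_cases i <;> simp [wdir, Real.cos_add, Real.sin_add]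

lemma mem_openQuad_zero_iff {θ : ℝ} {x z : Plane} :
    z ∈ openQuad θ 0 x ↔ ⟪x, wdir θ⟫ < ⟪z, wdir θ⟫ ∧
      ⟪x, wdir (θ + Real.pi / 2)⟫ < ⟪z, wdir (θ + Real.pi / 2)⟫ := by
  simp [openQuad, inner_sub_left]

lemma mem_openQuad_two_iff {θ : ℝ} {y z : Plane} :
    z ∈ openQuad θ 2 y ↔ ⟪z, wdir θ⟫ < ⟪y, wdir θ⟫ ∧
      ⟪z, wdir (θ + Real.pi / 2)⟫ < ⟪y, wdir (θ + Real.pi / 2)⟫ := by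
  have h₀ : θ + ((2 : Fin 4) : ℕ) * (Real.pi / 2) = θ + Real.pi := by
    simp only [Fin.val_two, Nat.cast_ofNat]; ring
  have h₁ : θ + (((2 : Fin 4) : ℕ) + 1) * (Real.pi / 2) = θ + Real.pi / 2 + Real.pi := by
    simp only [Fin.val_two, Nat.cast_ofNat]; ring
  simp only [openQuad, mem_ofPred_eq, h₀, h₁, wdir_add_pi, inner_neg_right, inner_sub_left,
    neg_pos, sub_neg]

lemma subset_RCH (θ : ℝ) (P : Set Plane) : P ⊆ RCH θ P := by
  simp only [RCH, subset_def, mem_sdiff, mem_univ, true_and, mem_iUnion, not_exists]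
  intro z hz a i hfree hza
  exact (eq_empty_iff_forall_notMem.mp hfree) z ⟨hza, hz⟩

lemma notMem_openQuad_of_mem_RCH {θ : ℝ} {P : Set Plane} {z a : Plane} {i : Fin 4}
    (hz : z ∈ RCH θ P) (hfree : openQuad θ i a ∩ P = ∅) : z ∉ openQuad θ i a := by
  simp only [RCH, mem_sdiff, mem_univ, true_and, mem_iUnion, not_exists] at hz
  exact hz a i hfree

lemma inner_wdir_notMem_Ioo_of_mem_RCH {θ : ℝ} {P : Set Plane} {x y z : Plane}
    (hfree₀ : openQuad θ 0 x ∩ P = ∅) (hfree₂ : openQuad θ 2 y ∩ P = ∅)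
    (hxy : ⟪x, wdir (θ + Real.pi / 2)⟫ < ⟪y, wdir (θ + Real.pi / 2)⟫) (hz : z ∈ RCH θ P) :
    ⟪z, wdir θ⟫ ∉ Ioo ⟪x, wdir θ⟫ ⟪y, wdir θ⟫ := by
  rintro ⟨hxz, hzy⟩
  have h₀ := notMem_openQuad_of_mem_RCH hz hfree₀
  have h₂ := notMem_openQuad_of_mem_RCH hz hfree₂
  rw [mem_openQuad_zero_iff, not_and, not_lt] at h₀
  rw [mem_openQuad_two_iff, not_and, not_lt] at h₂
  linarith [h₀ hxz, h₂ hzy]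

theorem rch_disconnected_of_overlap_general (P : Set Plane) (θ : ℝ)
    (x y : Plane)
    (hfree₀ : openQuad θ 0 x ∩ P = ∅) (hfree₂ : openQuad θ 2 y ∩ P = ∅)
    (hover₁ : 0 < ⟪y - x, wdir θ⟫) (hover₂ : 0 < ⟪y - x, wdir (θ + Real.pi / 2)⟫)
    (p : Plane) (hp : p ∈ P)
    (hp₁ : ⟪p, wdir θ⟫ ≤ ⟪x, wdir θ⟫)
    (q : Plane) (hq : q ∈ P)
    (hq₁ : ⟪y, wdir θ⟫ ≤ ⟪q, wdir θ⟫) :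
    ¬ IsPreconnected (RCH θ P) := by
  intro hconn
  rw [inner_sub_left, sub_pos] at hover₁ hover₂
  have hc : (⟪x, wdir θ⟫ + ⟪y, wdir θ⟫) / 2 ∈ Icc ⟪p, wdir θ⟫ ⟪q, wdir θ⟫ := by
    constructor <;> linarith
  obtain ⟨z, hz, hzc⟩ : ∃ z ∈ RCH θ P, ⟪z, wdir θ⟫ = (⟪x, wdir θ⟫ + ⟪y, wdir θ⟫) / 2 :=
    hconn.intermediate_value (subset_RCH θ P hp) (subset_RCH θ P hq)
      (continuous_id.inner continuous_const).continuousOn hc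
  refine inner_wdir_notMem_Ioo_of_mem_RCH hfree₀ hfree₂ hover₂ hz ?_
  rw [hzc]
  constructor <;> linarith

/-- If two opposite `P`-free open θ-quadrants overlap, and `P` contains points on both
sides of the overlapping region as described, then the rectilinear convex hull is
disconnected. -/
theorem rch_disconnected_of_overlap (P : Set Plane) (hP : P.Finite) (θ : ℝ)
    (x y : Plane)
    (hfree₀ : openQuad θ 0 x ∩ P = ∅) (hfree₂ : openQuad θ 2 y ∩ P = ∅)
    (hover₁ : 0 < ⟪y - x, wdir θ⟫) (hover₂ : 0 < ⟪y - x, wdir (θ + Real.pi / 2)⟫)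
    (p : Plane) (hp : p ∈ P)
    (hp₁ : ⟪p, wdir θ⟫ ≤ ⟪x, wdir θ⟫)
    (hp₂ : ⟪y, wdir (θ + Real.pi / 2)⟫ ≤ ⟪p, wdir (θ + Real.pi / 2)⟫)
    (q : Plane) (hq : q ∈ P)
    (hq₁ : ⟪y, wdir θ⟫ ≤ ⟪q, wdir θ⟫)
    (hq₂ : ⟪q, wdir (θ + Real.pi / 2)⟫ ≤ ⟪x, wdir (θ + Real.pi / 2)⟫) :
    ¬ IsPreconnected (RCH θ P) :=
  rch_disconnected_of_overlap_general P θ x y hfree₀ hfree₂ hover₁ hover₂ p hp hp₁ q hq hq₁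
end
end

section
/- Let P ⊆ ℝ² be finite and let d, n ∈ ℝ² be orthonormal vectors. Let a ∈ ℝ² and let u₁, u₂ be unit vectors with ⟨u₁, u₂⟩ ≤ 0 such that the interior of the wedge W(a; u₁, u₂) contains no point of P, and such that there exist vectors w₁ = s₁u₁ + t₁u₂ and w₂ = s₂u₁ + t₂u₂ with s₁, t₁, s₂, t₂ ≥ 0 satisfying ⟨w₁, n⟩ < 0, ⟨w₂, n⟩ < 0 and ⟨w₁, d⟩ < 0 < ⟨w₂, d⟩. Let b ∈ ℝ² and let v₁, v₂ be unit vectors with ⟨v₁, v₂⟩ = 0, ⟨v₁, n⟩ < 0, ⟨v₂, n⟩ < 0 and ⟨v₁, d⟩ < 0 < ⟨v₂, d⟩, and suppose there exist r₁, r₂ > 0 with b + r₁·v₁ ∈ P and b + r₂·v₂ ∈ P. Then b does not lie in the interior of W(a; u₁, u₂). (This is the corollary that no point b ≠ a of the subchain A_i(P), being the apex of a P-free quadrant supported by points of P whose rays cross the edge e_i on opposite sides of the perpendicular through b, can belong to the P-free wedge w_a of another point a of the subchain.) -/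
open scoped RealInnerProductSpace

noncomputable section

/-- The closed wedge with apex `a` spanned by the directions `u₁` and `u₂`. -/
def wedge (a u₁ u₂ : Plane) : Set Plane :=
  {z | ∃ s t : ℝ, 0 ≤ s ∧ 0 ≤ t ∧ z = a + s • u₁ + t • u₂}

/-!
If `b` were interior to `W(a; u₁, u₂)`, then so would be `b + c` for every `c` in the cone `C`
spanned by `u₁` and `u₂`, so it suffices to show that `C` contains `v₁` or `v₂`. The vector
`⟨w₂, d⟩ w₁ - ⟨w₁, d⟩ w₂ ∈ C` is orthogonal to `d`, hence a positive multiple of `-n`, and so lies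
in the open quadrant spanned by `v₁` and `v₂`. Since `w₁` and `w₂` are independent, `C` is a genuine
cone of angle at least `π/2`; meeting an open quadrant of angle `π/2`, it must contain one of the
quadrant's edges.
-/

open Module

section Frame

variable {E : Type*} [NormedAddCommGroup E] [InnerProductSpace ℝ E]

def frameDet (e f x y : E) : ℝ := ⟪x, e⟫ * ⟪y, f⟫ - ⟪x, f⟫ * ⟪y, e⟫

lemma frameDet_swap_frame (e f x y : E) : frameDet f e x y = -frameDet e f x y := by
  unfold frameDet; ring

lemma frameDet_smul_add_smul (e f x y : E) (s₁ t₁ s₂ t₂ : ℝ) :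
    frameDet e f (s₁ • x + t₁ • y) (s₂ • x + t₂ • y) = (s₁ * t₂ - t₁ * s₂) * frameDet e f x y := by
  simp only [frameDet, inner_add_left, real_inner_smul_left]; ring

variable {e f : E}

lemma inner_smul_add_inner_smul_eq_self (hE : finrank ℝ E = 2) (he : ‖e‖ = 1) (hf : ‖f‖ = 1)
    (hef : ⟪e, f⟫ = 0) (x : E) : ⟪x, e⟫ • e + ⟪x, f⟫ • f = x := by
  have hon : Orthonormal ℝ ![e, f] := by simp [orthonormal_vecCons_iff, he, hf, hef]
  let B := (basisOfOrthonormalOfCardEqFinrank hon (by simp [hE])).toOrthonormalBasis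
    (by rwa [coe_basisOfOrthonormalOfCardEqFinrank])
  have hB : ⇑B = ![e, f] := by simp [B]
  simpa [hB, Fin.sum_univ_two, real_inner_comm x] using B.sum_repr' x

lemma inner_eq_inner_mul_inner_add_inner_mul_inner (hE : finrank ℝ E = 2) (he : ‖e‖ = 1)
    (hf : ‖f‖ = 1) (hef : ⟪e, f⟫ = 0) (x y : E) :
    ⟪x, y⟫ = ⟪x, e⟫ * ⟪y, e⟫ + ⟪x, f⟫ * ⟪y, f⟫ := by
  conv_lhs => rw [← inner_smul_add_inner_smul_eq_self hE he hf hef x]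
  simp only [inner_add_left, real_inner_smul_left, real_inner_comm e, real_inner_comm f]

lemma frameDet_eq_mul_frameDet (hE : finrank ℝ E = 2) (he : ‖e‖ = 1) (hf : ‖f‖ = 1)
    (hef : ⟪e, f⟫ = 0) (d n x y : E) :
    frameDet d n x y = frameDet e f x y * frameDet e f d n := by
  have parseval := inner_eq_inner_mul_inner_add_inner_mul_inner hE he hf hef
  simp only [frameDet]
  rw [parseval x d, parseval y n, parseval x n, parseval y d]
  ring

lemma frameDet_smul_eq_sub (hE : finrank ℝ E = 2) (he : ‖e‖ = 1) (hf : ‖f‖ = 1)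
    (hef : ⟪e, f⟫ = 0) (x y : E) : frameDet e f x y • e = ⟪y, f⟫ • x - ⟪x, f⟫ • y := by
  have hx := inner_smul_add_inner_smul_eq_self hE he hf hef x
  have hy := inner_smul_add_inner_smul_eq_self hE he hf hef y
  unfold frameDet
  linear_combination (norm := module) ⟪y, f⟫ • hx - ⟪x, f⟫ • hy

lemma inner_inner_smul_sub_inner_smul (hE : finrank ℝ E = 2) (he : ‖e‖ = 1) (hf : ‖f‖ = 1)
    (hef : ⟪e, f⟫ = 0) (x y v : E) :
    ⟪⟪y, e⟫ • x - ⟪x, e⟫ • y, v⟫ = frameDet e f x y * -⟪v, f⟫ := by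
  rw [inner_eq_inner_mul_inner_add_inner_mul_inner hE he hf hef]
  simp only [frameDet, inner_sub_left, real_inner_smul_left]
  ring

def InCone (u₁ u₂ x : E) : Prop := ∃ s t : ℝ, 0 ≤ s ∧ 0 ≤ t ∧ x = s • u₁ + t • u₂

namespace InCone

variable {u₁ u₂ x y : E}

lemma add (hx : InCone u₁ u₂ x) (hy : InCone u₁ u₂ y) : InCone u₁ u₂ (x + y) := by
  obtain ⟨s, t, hs, ht, rfl⟩ := hx
  obtain ⟨s', t', hs', ht', rfl⟩ := hy
  exact ⟨s + s', t + t', add_nonneg hs hs', add_nonneg ht ht', by module⟩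

lemma smul {r : ℝ} (hr : 0 ≤ r) (hx : InCone u₁ u₂ x) : InCone u₁ u₂ (r • x) := by
  obtain ⟨s, t, hs, ht, rfl⟩ := hx
  exact ⟨r * s, r * t, mul_nonneg hr hs, mul_nonneg hr ht, by module⟩

lemma of_smul_eq {D α β : ℝ} (hD : 0 < D) (hα : 0 ≤ α) (hβ : 0 ≤ β)
    (h : D • x = α • u₁ + β • u₂) : InCone u₁ u₂ x := by
  refine ⟨α / D, β / D, div_nonneg hα hD.le, div_nonneg hβ hD.le, ?_⟩
  rw [← smul_right_inj hD.ne', h, smul_add, smul_smul, smul_smul, mul_div_cancel₀ _ hD.ne',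
    mul_div_cancel₀ _ hD.ne']

end InCone

/-- Coordinate form of: a cone of angle at least `π/2` meeting the open first quadrant contains
one of the two coordinate half-axes. -/
lemma quadrant_edge_sign {a₁ a₂ b₁ b₂ s t : ℝ} (hD : 0 < a₁ * b₂ - a₂ * b₁)
    (hab : a₁ * b₁ + a₂ * b₂ ≤ 0) (hs : 0 ≤ s) (ht : 0 ≤ t)
    (h₁ : 0 < s * a₁ + t * b₁) (h₂ : 0 < s * a₂ + t * b₂) :
    (a₂ ≤ 0 ∧ 0 ≤ b₂) ∨ (0 ≤ a₁ ∧ b₁ ≤ 0) := by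
  by_contra! h
  obtain ⟨hb₂, hb₁⟩ := h
  rcases le_or_gt a₂ 0 with ha₂ | ha₂ <;> rcases le_or_gt 0 a₁ with ha₁ | ha₁
  · have : s * (a₁ * b₂ - a₂ * b₁) = (s * a₁ + t * b₁) * b₂ - (s * a₂ + t * b₂) * b₁ := by ring
    nlinarith [mul_neg_of_pos_of_neg h₁ (hb₂ ha₂), mul_pos h₂ (hb₁ ha₁)]
  · nlinarith [hb₂ ha₂]
  · have hb₁ := hb₁ ha₁
    have hb₂ : b₂ ≤ 0 := by nlinarith
    nlinarith
  · have : t * (a₁ * b₂ - a₂ * b₁) = a₁ * (s * a₂ + t * b₂) - a₂ * (s * a₁ + t * b₁) := by ring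
    nlinarith [mul_neg_of_neg_of_pos ha₁ h₂, mul_pos ha₂ h₁]

lemma inCone_or_inCone_of_frameDet_pos (hE : finrank ℝ E = 2) (he : ‖e‖ = 1) (hf : ‖f‖ = 1)
    (hef : ⟪e, f⟫ = 0) {u₁ u₂ z : E} (hu : ⟪u₁, u₂⟫ ≤ 0) (hD : 0 < frameDet e f u₁ u₂)
    (hz : InCone u₁ u₂ z) (hze : 0 < ⟪z, e⟫) (hzf : 0 < ⟪z, f⟫) :
    InCone u₁ u₂ e ∨ InCone u₁ u₂ f := by
  obtain ⟨s, t, hs, ht, rfl⟩ := hz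
  rw [inner_eq_inner_mul_inner_add_inner_mul_inner hE he hf hef] at hu
  simp only [inner_add_left, real_inner_smul_left] at hze hzf
  rcases quadrant_edge_sign hD hu hs ht hze hzf with ⟨h₁, h₂⟩ | ⟨h₁, h₂⟩
  · refine .inl (.of_smul_eq hD h₂ (neg_nonneg.mpr h₁) ?_)
    rw [frameDet_smul_eq_sub hE he hf hef, neg_smul, sub_eq_add_neg]
  · have hD' : frameDet f e u₂ u₁ = frameDet e f u₁ u₂ := by unfold frameDet; ring
    refine .inr (.of_smul_eq hD (neg_nonneg.mpr h₂) h₁ ?_)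
    rw [← hD', frameDet_smul_eq_sub hE hf he (by rwa [real_inner_comm]), neg_smul,
      sub_eq_add_neg, add_comm]

lemma inCone_or_inCone (hE : finrank ℝ E = 2) (he : ‖e‖ = 1) (hf : ‖f‖ = 1)
    (hef : ⟪e, f⟫ = 0) {u₁ u₂ z : E} (hu : ⟪u₁, u₂⟫ ≤ 0) (hD : frameDet e f u₁ u₂ ≠ 0)
    (hz : InCone u₁ u₂ z) (hze : 0 < ⟪z, e⟫) (hzf : 0 < ⟪z, f⟫) :
    InCone u₁ u₂ e ∨ InCone u₁ u₂ f := by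
  rcases hD.lt_or_gt with hD | hD
  · rw [← neg_pos, ← frameDet_swap_frame] at hD
    exact (inCone_or_inCone_of_frameDet_pos hE hf he (by rwa [real_inner_comm]) hu hD hz
      hzf hze).symm
  · exact inCone_or_inCone_of_frameDet_pos hE he hf hef hu hD hz hze hzf

end Frame

lemma add_mem_interior_wedge {a u₁ u₂ x c : Plane} (hx : x ∈ interior (wedge a u₁ u₂))
    (hc : InCone u₁ u₂ c) : x + c ∈ interior (wedge a u₁ u₂) := by
  obtain ⟨s, t, hs, ht, rfl⟩ := hc
  have hW : (· + (s • u₁ + t • u₂)) '' wedge a u₁ u₂ ⊆ wedge a u₁ u₂ := by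
    rintro _ ⟨_, ⟨s', t', hs', ht', rfl⟩, rfl⟩
    exact ⟨s' + s, t' + t, add_nonneg hs' hs, add_nonneg ht' ht, by module⟩
  exact interior_mono hW ((isOpenMap_add_right _).image_interior_subset _ ⟨x, hx, rfl⟩)

theorem apex_not_mem_free_wedge_general (P : Set Plane) (d n : Plane)
    (hd : ‖d‖ = 1) (hn : ‖n‖ = 1) (hdn : ⟪d, n⟫ = 0)
    (a u₁ u₂ : Plane) (hu₁u₂ : ⟪u₁, u₂⟫ ≤ 0)
    (hfree : interior (wedge a u₁ u₂) ∩ P = ∅)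
    (w₁ w₂ : Plane)
    (hw₁ : ∃ s₁ t₁ : ℝ, 0 ≤ s₁ ∧ 0 ≤ t₁ ∧ w₁ = s₁ • u₁ + t₁ • u₂)
    (hw₂ : ∃ s₂ t₂ : ℝ, 0 ≤ s₂ ∧ 0 ≤ t₂ ∧ w₂ = s₂ • u₁ + t₂ • u₂)
    (hw₁n : ⟪w₁, n⟫ < 0) (hw₂n : ⟪w₂, n⟫ < 0)
    (hw₁d : ⟪w₁, d⟫ < 0) (hw₂d : 0 < ⟪w₂, d⟫)
    (b v₁ v₂ : Plane) (hv₁ : ‖v₁‖ = 1) (hv₂ : ‖v₂‖ = 1) (hv₁v₂ : ⟪v₁, v₂⟫ = 0)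
    (hv₁n : ⟪v₁, n⟫ < 0) (hv₂n : ⟪v₂, n⟫ < 0)
    (hr₁ : ∃ r₁ > 0, b + r₁ • v₁ ∈ P) (hr₂ : ∃ r₂ > 0, b + r₂ • v₂ ∈ P) :
    b ∉ interior (wedge a u₁ u₂) := by
  intro hb
  have hE : finrank ℝ Plane = 2 := finrank_euclideanSpace_fin
  have hΔ : 0 < frameDet d n w₁ w₂ := by
    unfold frameDet
    nlinarith [mul_pos_of_neg_of_neg hw₁d hw₂n, mul_neg_of_neg_of_pos hw₁n hw₂d]
  have hD : frameDet v₁ v₂ u₁ u₂ ≠ 0 := by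
    obtain ⟨s₁, t₁, -, -, rfl⟩ := hw₁
    obtain ⟨s₂, t₂, -, -, rfl⟩ := hw₂
    intro h
    rw [frameDet_eq_mul_frameDet hE hv₁ hv₂ hv₁v₂, frameDet_smul_add_smul, h] at hΔ
    simp at hΔ
  set z := ⟪w₂, d⟫ • w₁ - ⟪w₁, d⟫ • w₂ with hz_def
  have hz : InCone u₁ u₂ z := by
    rw [hz_def, sub_eq_add_neg, ← neg_smul]
    exact (InCone.smul hw₂d.le hw₁).add (InCone.smul (neg_nonneg.mpr hw₁d.le) hw₂)
  have hzv (v : Plane) (hv : ⟪v, n⟫ < 0) : 0 < ⟪z, v⟫ := by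
    rw [hz_def, inner_inner_smul_sub_inner_smul hE hd hn hdn]
    exact mul_pos hΔ (neg_pos.mpr hv)
  have hcone (v : Plane) (hv : InCone u₁ u₂ v) (r : ℕ) : b + r • v ∉ P := by
    rw [← Nat.cast_smul_eq_nsmul ℝ]
    exact fun hP ↦ hfree.subset ⟨add_mem_interior_wedge hb (hv.smul r.cast_nonneg), hP⟩
  obtain ⟨r₁, -, hP₁⟩ := hr₁
  obtain ⟨r₂, -, hP₂⟩ := hr₂
  rcases inCone_or_inCone hE hv₁ hv₂ hv₁v₂ hu₁u₂ hD hz (hzv v₁ hv₁n) (hzv v₂ hv₂n) with h | h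
  · exact hcone v₁ h r₁ hP₁
  · exact hcone v₂ h r₂ hP₂

/-- No apex `b` of a `P`-supported quadrant whose rays cross the hull edge (of direction
`d`, with inward normal `n`) on opposite sides of the perpendicular through `b` can lie
in the interior of the `P`-free wedge of another subchain point `a`. -/
theorem apex_not_mem_free_wedge (P : Set Plane) (hP : P.Finite) (d n : Plane)
    (hd : ‖d‖ = 1) (hn : ‖n‖ = 1) (hdn : ⟪d, n⟫ = 0)
    (a u₁ u₂ : Plane) (hu₁ : ‖u₁‖ = 1) (hu₂ : ‖u₂‖ = 1) (hu₁u₂ : ⟪u₁, u₂⟫ ≤ 0)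
    (hfree : interior (wedge a u₁ u₂) ∩ P = ∅)
    (w₁ w₂ : Plane)
    (hw₁ : ∃ s₁ t₁ : ℝ, 0 ≤ s₁ ∧ 0 ≤ t₁ ∧ w₁ = s₁ • u₁ + t₁ • u₂)
    (hw₂ : ∃ s₂ t₂ : ℝ, 0 ≤ s₂ ∧ 0 ≤ t₂ ∧ w₂ = s₂ • u₁ + t₂ • u₂)
    (hw₁n : ⟪w₁, n⟫ < 0) (hw₂n : ⟪w₂, n⟫ < 0)
    (hw₁d : ⟪w₁, d⟫ < 0) (hw₂d : 0 < ⟪w₂, d⟫)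
    (b v₁ v₂ : Plane) (hv₁ : ‖v₁‖ = 1) (hv₂ : ‖v₂‖ = 1) (hv₁v₂ : ⟪v₁, v₂⟫ = 0)
    (hv₁n : ⟪v₁, n⟫ < 0) (hv₂n : ⟪v₂, n⟫ < 0)
    (hv₁d : ⟪v₁, d⟫ < 0) (hv₂d : 0 < ⟪v₂, d⟫)
    (hr₁ : ∃ r₁ > 0, b + r₁ • v₁ ∈ P) (hr₂ : ∃ r₂ > 0, b + r₂ • v₂ ∈ P) :
    b ∉ interior (wedge a u₁ u₂) :=
  apex_not_mem_free_wedge_general P d n hd hn hdn a u₁ u₂ hu₁u₂ hfree w₁ w₂ hw₁ hw₂ hw₁n hw₂n hw₁d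
    hw₂d b v₁ v₂ hv₁ hv₂ hv₁v₂ hv₁n hv₂n hr₁ hr₂
end
end

section
/- Let P ⊆ ℝ² be finite and let d, n ∈ ℝ² be orthonormal vectors. Let A ⊆ ℝ² be a set of points such that every a ∈ A admits unit vectors v₁, v₂ with ⟨v₁, v₂⟩ = 0, ⟨v₁, n⟩ < 0, ⟨v₂, n⟩ < 0 and ⟨v₁, d⟩ < 0 < ⟨v₂, d⟩, for which the interior of the quadrant W(a; v₁, v₂) contains no point of P and there exist r₁, r₂ > 0 with a + r₁·v₁ ∈ P and a + r₂·v₂ ∈ P. Then for every c ∈ ℝ the line {z ∈ ℝ² : ⟨z, d⟩ = c} (a line orthogonal to the direction d) contains at most one point of A. (This is the Monotony lemma: any line orthogonal to the hull edge e_i intersects the subchain A_i(P) at most once.) -/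
open scoped RealInnerProductSpace

noncomputable section

/-- Any vector decomposes along an orthonormal pair in the plane. -/
lemma Plane.decomp (w₁ w₂ : Plane) (h1 : ‖w₁‖ = 1) (h2 : ‖w₂‖ = 1) (h12 : ⟪w₁, w₂⟫ = 0) :
    ∀ z : Plane, z = ⟪z, w₁⟫ • w₁ + ⟪z, w₂⟫ • w₂ := by
  have hw11 : ⟪w₁, w₁⟫ = 1 := by rw [real_inner_self_eq_norm_mul_norm, h1]; norm_num
  have hw22 : ⟪w₂, w₂⟫ = 1 := by rw [real_inner_self_eq_norm_mul_norm, h2]; norm_num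
  have hw21 : ⟪w₂, w₁⟫ = 0 := by rw [real_inner_comm]; exact h12
  have horth : Orthonormal ℝ ![w₁, w₂] := by
    rw [orthonormal_iff_ite]
    intro i j
    fin_cases i <;> fin_cases j <;>
      simp only [Matrix.cons_val_zero, Matrix.cons_val_one, Matrix.head_cons] <;>
      simp_all
  have hcard : Fintype.card (Fin 2) = Module.finrank ℝ Plane := by simp
  have hspan : Submodule.span ℝ (Set.range ![w₁, w₂]) = ⊤ := by
    rw [← coe_basisOfOrthonormalOfCardEqFinrank horth hcard]
    exact (basisOfOrthonormalOfCardEqFinrank horth hcard).span_eq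
  have hpair : Set.range ![w₁, w₂] = ({w₁, w₂} : Set Plane) := by
    ext x; simp [Fin.exists_fin_two]; tauto
  intro z
  have hz : z ∈ Submodule.span ℝ ({w₁, w₂} : Set Plane) := by
    rw [← hpair, hspan]; trivial
  obtain ⟨s, t, hst⟩ := Submodule.mem_span_pair.mp hz
  have hs : ⟪z, w₁⟫ = s := by
    rw [← hst, inner_add_left, real_inner_smul_left, real_inner_smul_left, hw11, hw21]; ring
  have ht : ⟪z, w₂⟫ = t := by
    rw [← hst, inner_add_left, real_inner_smul_left, real_inner_smul_left, hw22, h12]; ring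
  rw [hs, ht, hst]

/-- Inner products expand in coordinates relative to an orthonormal pair. -/
lemma Plane.inner_expand (d n : Plane) (hd : ‖d‖ = 1) (hn : ‖n‖ = 1) (hdn : ⟪d, n⟫ = 0) :
    ∀ v w : Plane, ⟪v, w⟫ = ⟪v, d⟫ * ⟪w, d⟫ + ⟪v, n⟫ * ⟪w, n⟫ := by
  intro v w
  conv_lhs => rw [Plane.decomp d n hd hn hdn w]
  rw [inner_add_right, real_inner_smul_right, real_inner_smul_right]
  ring

/-- The open quadrant is inside the interior of the wedge. -/
lemma Plane.mem_interior_wedge (b w₁ w₂ : Plane) (h1 : ‖w₁‖ = 1) (h2 : ‖w₂‖ = 1)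
    (h12 : ⟪w₁, w₂⟫ = 0) (z : Plane) (hz1 : 0 < ⟪z - b, w₁⟫) (hz2 : 0 < ⟪z - b, w₂⟫) :
    z ∈ interior (wedge b w₁ w₂) := by
  set U : Set Plane := {z | 0 < ⟪z - b, w₁⟫ ∧ 0 < ⟪z - b, w₂⟫} with hU
  have hc : ∀ w : Plane, Continuous fun z : Plane => ⟪z - b, w⟫ :=
    fun w => (continuous_id.sub continuous_const).inner continuous_const
  have hUopen : IsOpen U :=
    ((isOpen_lt continuous_const (hc w₁))).inter ((isOpen_lt continuous_const (hc w₂)))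
  have hsub : U ⊆ wedge b w₁ w₂ := by
    rintro z ⟨a1, a2⟩
    refine ⟨⟪z - b, w₁⟫, ⟪z - b, w₂⟫, a1.le, a2.le, ?_⟩
    have h := Plane.decomp w₁ w₂ h1 h2 h12 (z - b)
    rw [add_assoc, ← h]
    abel
  exact interior_maximal hsub hUopen ⟨hz1, hz2⟩

/-- Rotation identity for orthonormal pairs in coordinates. -/
lemma rot_aux (p q r s : ℝ) (h1 : p * p + q * q = 1) (h2 : r * r + s * s = 1)
    (h3 : p * r + q * s = 0) (h4 : p < 0) (h5 : q < 0) (h6 : 0 < r) (h7 : s < 0) :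
    r = -q ∧ s = p := by
  have hq : (r * q - p * s) ^ 2 = 1 := by nlinarith [sq_nonneg (p*r + q*s)]
  have hmul : (r * q - p * s - 1) * (r * q - p * s + 1) = 0 := by nlinarith
  rcases mul_eq_zero.mp hmul with h | h
  · exfalso
    have hz : (r - q) ^ 2 + (s + p) ^ 2 = 0 := by nlinarith
    nlinarith [sq_nonneg (s + p)]
  · have hz : (r + q) ^ 2 + (s - p) ^ 2 = 0 := by nlinarith
    constructor <;> nlinarith [sq_nonneg (r + q), sq_nonneg (s - p)]

/-- Key lemma: if `y` lies strictly above `x` (in direction `n`) on the same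
perpendicular line, the supporting point of `x`'s quadrant lies in the interior
of `y`'s quadrant, contradicting emptiness. -/
lemma Plane.key (P : Set Plane) (d n : Plane)
    (hd : ‖d‖ = 1) (hn : ‖n‖ = 1) (hdn : ⟪d, n⟫ = 0) (x y : Plane)
    (v₁ v₂ : Plane) (hv1 : ‖v₁‖ = 1) (hv2 : ‖v₂‖ = 1) (hv12 : ⟪v₁, v₂⟫ = 0)
    (hv1n : ⟪v₁, n⟫ < 0) (hv2n : ⟪v₂, n⟫ < 0) (hv1d : ⟪v₁, d⟫ < 0) (hv2d : 0 < ⟪v₂, d⟫)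
    (hsup1 : ∃ r > 0, x + r • v₁ ∈ P) (hsup2 : ∃ r > 0, x + r • v₂ ∈ P)
    (w₁ w₂ : Plane) (hw1 : ‖w₁‖ = 1) (hw2 : ‖w₂‖ = 1) (hw12 : ⟪w₁, w₂⟫ = 0)
    (hw1n : ⟪w₁, n⟫ < 0) (hw2n : ⟪w₂, n⟫ < 0) (hw1d : ⟪w₁, d⟫ < 0) (hw2d : 0 < ⟪w₂, d⟫)
    (hint : interior (wedge y w₁ w₂) ∩ P = ∅)
    (hxyd : ⟪y - x, d⟫ = 0) (hxyn : 0 < ⟪y - x, n⟫) : False := by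
  have exp := Plane.inner_expand d n hd hn hdn
  set a1 := ⟪v₁, d⟫ with ha1
  set b1 := ⟪v₁, n⟫ with hb1
  set a2 := ⟪v₂, d⟫ with ha2
  set b2 := ⟪v₂, n⟫ with hb2
  set c1 := ⟪w₁, d⟫ with hc1
  set e1 := ⟪w₁, n⟫ with he1
  set c2 := ⟪w₂, d⟫ with hc2
  set e2 := ⟪w₂, n⟫ with he2
  have nv1 : a1 * a1 + b1 * b1 = 1 := by
    rw [← exp v₁ v₁, real_inner_self_eq_norm_mul_norm, hv1]; norm_num
  have nv2 : a2 * a2 + b2 * b2 = 1 := by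
    rw [← exp v₂ v₂, real_inner_self_eq_norm_mul_norm, hv2]; norm_num
  have ov : a1 * a2 + b1 * b2 = 0 := by rw [← exp v₁ v₂]; exact hv12
  have nw1 : c1 * c1 + e1 * e1 = 1 := by
    rw [← exp w₁ w₁, real_inner_self_eq_norm_mul_norm, hw1]; norm_num
  have nw2 : c2 * c2 + e2 * e2 = 1 := by
    rw [← exp w₂ w₂, real_inner_self_eq_norm_mul_norm, hw2]; norm_num
  have ow : c1 * c2 + e1 * e2 = 0 := by rw [← exp w₁ w₂]; exact hw12
  obtain ⟨hv_a2, hv_b2⟩ := rot_aux a1 b1 a2 b2 nv1 nv2 ov hv1d hv1n hv2d hv2n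
  obtain ⟨hw_c2, hw_e2⟩ := rot_aux c1 e1 c2 e2 nw1 nw2 ow hw1d hw1n hw2d hw2n
  -- generic step: a P-point on a ray from x lies in interior of y's wedge
  have step : ∀ (v : Plane) (r : ℝ), 0 < r → x + r • v ∈ P →
      0 ≤ ⟪v, w₁⟫ → 0 ≤ ⟪v, w₂⟫ → False := by
    intro v r hr hP hvw1 hvw2
    have hxd : ⟪x - y, d⟫ = 0 := by
      rw [show x - y = -(y - x) by abel, inner_neg_left, hxyd, neg_zero]
    have hxn : ⟪x - y, n⟫ = -⟪y - x, n⟫ := by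
      rw [show x - y = -(y - x) by abel, inner_neg_left]
    have hmem : x + r • v ∈ interior (wedge y w₁ w₂) := by
      apply Plane.mem_interior_wedge y w₁ w₂ hw1 hw2 hw12
      · rw [show x + r • v - y = (x - y) + r • v by abel, inner_add_left,
          real_inner_smul_left, exp (x - y) w₁, hxd, hxn]
        have h1 : 0 < -⟪y - x, n⟫ * e1 := mul_pos_of_neg_of_neg (by linarith) hw1n
        have h2 : 0 ≤ r * ⟪v, w₁⟫ := mul_nonneg hr.le hvw1
        linarith
      · rw [show x + r • v - y = (x - y) + r • v by abel, inner_add_left,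
          real_inner_smul_left, exp (x - y) w₂, hxd, hxn]
        have h1 : 0 < -⟪y - x, n⟫ * e2 := mul_pos_of_neg_of_neg (by linarith) hw2n
        have h2 : 0 ≤ r * ⟪v, w₂⟫ := mul_nonneg hr.le hvw2
        linarith
    have : x + r • v ∈ interior (wedge y w₁ w₂) ∩ P := ⟨hmem, hP⟩
    rw [hint] at this
    exact this
  have hvw11 : 0 < ⟪v₁, w₁⟫ := by
    rw [exp v₁ w₁]
    have := mul_pos_of_neg_of_neg hv1d hw1d
    have := mul_pos_of_neg_of_neg hv1n hw1n
    linarith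
  have hvw22 : 0 < ⟪v₂, w₂⟫ := by
    rw [exp v₂ w₂]
    have := mul_pos hv2d hw2d
    have := mul_pos_of_neg_of_neg hv2n hw2n
    linarith
  by_cases hB : 0 ≤ a1 * c2 + b1 * e2
  · obtain ⟨r, hr, hP⟩ := hsup1
    have hcast : ((r : ℝ)) • v₁ = r • v₁ := Nat.cast_smul_eq_nsmul ℝ r v₁
    exact step v₁ (r : ℝ) (by exact_mod_cast hr) (by rw [hcast]; exact hP)
      hvw11.le (by rw [exp v₁ w₂]; exact hB)
  · obtain ⟨r, hr, hP⟩ := hsup2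
    have hcast : ((r : ℝ)) • v₂ = r • v₂ := Nat.cast_smul_eq_nsmul ℝ r v₂
    refine step v₂ (r : ℝ) (by exact_mod_cast hr) (by rw [hcast]; exact hP) ?_ hvw22.le
    rw [exp v₂ w₁]
    show 0 ≤ a2 * c1 + b2 * e1
    rw [hv_a2, hv_b2]
    rw [hw_c2, hw_e2] at hB
    push_neg at hB
    linarith
/-- Monotony lemma: if every point of `A` is the apex of a `P`-free quadrant, supported
by points of `P`, whose rays point towards the hull edge (of direction `d` and inward
normal `n`) and cross it on opposite sides of the perpendicular through the apex, then
any line orthogonal to `d` meets `A` at most once. -/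
theorem subchain_monotone (P : Set Plane) (hP : P.Finite) (d n : Plane)
    (hd : ‖d‖ = 1) (hn : ‖n‖ = 1) (hdn : ⟪d, n⟫ = 0)
    (A : Set Plane)
    (hA : ∀ a ∈ A, ∃ v₁ v₂ : Plane, ‖v₁‖ = 1 ∧ ‖v₂‖ = 1 ∧ ⟪v₁, v₂⟫ = 0 ∧
      ⟪v₁, n⟫ < 0 ∧ ⟪v₂, n⟫ < 0 ∧ ⟪v₁, d⟫ < 0 ∧ 0 < ⟪v₂, d⟫ ∧
      interior (wedge a v₁ v₂) ∩ P = ∅ ∧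
      (∃ r₁ > 0, a + r₁ • v₁ ∈ P) ∧ (∃ r₂ > 0, a + r₂ • v₂ ∈ P)) :
    ∀ c : ℝ, ({z ∈ A | ⟪z, d⟫ = c} : Set Plane).Subsingleton := by
  intro c x hx y hy
  obtain ⟨hxA, hxc⟩ := hx
  obtain ⟨hyA, hyc⟩ := hy
  by_contra hne
  obtain ⟨v₁, v₂, hv1, hv2, hv12, hv1n, hv2n, hv1d, hv2d, hintx, hs1x, hs2x⟩ := hA x hxA
  obtain ⟨w₁, w₂, hw1, hw2, hw12, hw1n, hw2n, hw1d, hw2d, hinty, hs1y, hs2y⟩ := hA y hyA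
  have hxyd : ⟪y - x, d⟫ = 0 := by rw [inner_sub_left, hxc, hyc, sub_self]
  rcases lt_trichotomy (⟪y - x, n⟫ : ℝ) 0 with h | h | h
  · have hyxd : ⟪x - y, d⟫ = 0 := by
      rw [show x - y = -(y - x) by abel, inner_neg_left, hxyd, neg_zero]
    have hyxn : 0 < ⟪x - y, n⟫ := by
      rw [show x - y = -(y - x) by abel, inner_neg_left]; linarith
    exact Plane.key P d n hd hn hdn y x w₁ w₂ hw1 hw2 hw12 hw1n hw2n hw1d hw2d
      hs1y hs2y v₁ v₂ hv1 hv2 hv12 hv1n hv2n hv1d hv2d hintx hyxd hyxn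
  · apply hne
    have hdec := Plane.decomp d n hd hn hdn (y - x)
    rw [hxyd, h] at hdec
    simp only [zero_smul, add_zero] at hdec
    exact (sub_eq_zero.mp hdec).symm
  · exact Plane.key P d n hd hn hdn x y v₁ v₂ hv1 hv2 hv12 hv1n hv2n hv1d hv2d
      hs1x hs2x w₁ w₂ hw1 hw2 hw12 hw1n hw2n hw1d hw2d hinty hxyd h
end
end

section
/- Let ι be a finite index set, let c : ι → ℝ² and r : ι → ℝ with r i ≥ 0 for all i, and let k be a natural number. Suppose the family of closed disks {closedBall(c i, r i)}_{i ∈ ι} is a k-set, i.e. for every point z ∈ ℝ² the number of indices i with z ∈ closedBall(c i, r i) is at most k. Let i₀ ∈ ι be an index of minimal radius, i.e. r i₀ ≤ r i for all i ∈ ι. Then the number of indices i ∈ ι such that closedBall(c i, r i) ∩ closedBall(c i₀, r i₀) is nonempty is at most 7k. -/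
open Metric

noncomputable section

/-- Make a point of the plane from coordinates. -/
noncomputable def mk2 (a b : ℝ) : Plane := (WithLp.equiv 2 (Fin 2 → ℝ)).symm ![a, b]

lemma dist_mk2 (x z : Plane) : dist x z = Real.sqrt ((x 0 - z 0)^2 + (x 1 - z 1)^2) := by
  rw [EuclideanSpace.dist_eq, Fin.sum_univ_two]
  simp [Real.dist_eq, sq_abs]

lemma sq_le_imp (x u : ℝ) (hx : 0 ≤ x) (hu : 0 ≤ u) (h : x^2 ≤ u^2) : x ≤ u := by
  have := Real.sqrt_le_sqrt h
  rwa [Real.sqrt_sq hx, Real.sqrt_sq hu] at this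

lemma ineq_aux (r r₀ d : ℝ) (h0 : 0 ≤ r₀) (h1 : r₀ ≤ r) (h2 : r ≤ d) (h3 : d ≤ r + r₀) :
    d^2 + 3*r₀^2 - 3*(r₀*d) ≤ r^2 := by
  rcases le_total d (2*r₀) with h | h
  · nlinarith [mul_nonneg (sub_nonneg.2 (h1.trans h2)) (sub_nonneg.2 h),
      mul_nonneg (sub_nonneg.2 h1) (by linarith : (0:ℝ) ≤ r + r₀)]
  · nlinarith [mul_nonneg h0 (sub_nonneg.2 h),
      mul_nonneg (by linarith : (0:ℝ) ≤ r - (d - r₀)) (by linarith : (0:ℝ) ≤ r + (d - r₀))]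

/-- Direction lemma: some of the six 60°-spaced unit vectors makes angle ≤ 30° with (a,b). -/
lemma dir_aux (s a b d : ℝ) (hs0 : 0 ≤ s) (hs2 : s^2 = 3) (hd0 : 0 ≤ d)
    (hd2 : d^2 = a^2 + b^2) :
    ∃ A B : ℝ, A^2 + B^2 = 1 ∧ s*d ≤ 2*(A*a + B*b) ∧
      ((A = 1 ∧ B = 0) ∨ (A = 1/2 ∧ B = s/2) ∨ (A = -(1/2) ∧ B = s/2) ∨
       (A = -1 ∧ B = 0) ∨ (A = -(1/2) ∧ B = -(s/2)) ∨ (A = 1/2 ∧ B = -(s/2))) := by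
  have hsd : 0 ≤ s * d := mul_nonneg hs0 hd0
  rcases le_total 0 a with ha | ha <;> rcases le_total 0 b with hb | hb
  · rcases le_total (s*b) a with h | h
    · exact ⟨1, 0, by norm_num, by
        refine sq_le_imp _ _ hsd (by linarith) ?_
        nlinarith [mul_nonneg (sub_nonneg.2 h) (by nlinarith [mul_nonneg hs0 hb] : (0:ℝ) ≤ a + s*b)],
        Or.inl ⟨rfl, rfl⟩⟩
    · exact ⟨1/2, s/2, by nlinarith, by
        refine sq_le_imp _ _ hsd (by nlinarith) ?_
        nlinarith [mul_nonneg ha (sub_nonneg.2 h)],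
        Or.inr (Or.inl ⟨rfl, rfl⟩)⟩
  · rcases le_total (s*(-b)) a with h | h
    · exact ⟨1, 0, by norm_num, by
        refine sq_le_imp _ _ hsd (by linarith) ?_
        nlinarith [mul_nonneg (by linarith : (0:ℝ) ≤ a - s*(-b)) (by nlinarith : (0:ℝ) ≤ a + s*(-b))],
        Or.inl ⟨rfl, rfl⟩⟩
    · exact ⟨1/2, -(s/2), by nlinarith, by
        refine sq_le_imp _ _ hsd (by nlinarith) ?_
        nlinarith [mul_nonneg ha (sub_nonneg.2 h)],
        Or.inr (Or.inr (Or.inr (Or.inr (Or.inr ⟨rfl, rfl⟩))))⟩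
  · rcases le_total (s*b) (-a) with h | h
    · exact ⟨-1, 0, by norm_num, by
        refine sq_le_imp _ _ hsd (by linarith) ?_
        nlinarith [mul_nonneg (sub_nonneg.2 h) (by nlinarith [mul_nonneg hs0 hb] : (0:ℝ) ≤ -a + s*b)],
        Or.inr (Or.inr (Or.inr (Or.inl ⟨rfl, rfl⟩)))⟩
    · exact ⟨-(1/2), s/2, by nlinarith, by
        refine sq_le_imp _ _ hsd (by nlinarith) ?_
        nlinarith [mul_nonneg (by linarith : (0:ℝ) ≤ -a) (sub_nonneg.2 h)],
        Or.inr (Or.inr (Or.inl ⟨rfl, rfl⟩))⟩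
  · rcases le_total (s*(-b)) (-a) with h | h
    · exact ⟨-1, 0, by norm_num, by
        refine sq_le_imp _ _ hsd (by linarith) ?_
        nlinarith [mul_nonneg (by linarith : (0:ℝ) ≤ -a - s*(-b)) (by nlinarith : (0:ℝ) ≤ -a + s*(-b))],
        Or.inr (Or.inr (Or.inr (Or.inl ⟨rfl, rfl⟩)))⟩
    · exact ⟨-(1/2), -(s/2), by nlinarith, by
        refine sq_le_imp _ _ hsd (by nlinarith) ?_
        nlinarith [mul_nonneg (by linarith : (0:ℝ) ≤ -a) (sub_nonneg.2 h)],
        Or.inr (Or.inr (Or.inr (Or.inr (Or.inl ⟨rfl, rfl⟩))))⟩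

lemma ball_ineq (a b d r r₀ A B s : ℝ) (hs0 : 0 ≤ s) (hs2 : s^2 = 3)
    (h0 : 0 ≤ r₀) (h1 : r₀ ≤ r) (h2 : r ≤ d) (h3 : d ≤ r + r₀)
    (hd2 : d^2 = a^2 + b^2) (hAB2 : A^2 + B^2 = 1) (hAB : s*d ≤ 2*(A*a + B*b)) :
    (s*r₀*A - a)^2 + (s*r₀*B - b)^2 ≤ r^2 := by
  have hineq := ineq_aux r r₀ d h0 h1 h2 h3
  have h := mul_le_mul_of_nonneg_left hAB (mul_nonneg hs0 h0)
  have e2 : (s*r₀) * (s*d) = 3*(r₀*d) := by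
    rw [show (s*r₀) * (s*d) = s^2 * (r₀*d) from by ring, hs2]
  rw [e2] at h
  have e1 : (s*r₀*A - a)^2 + (s*r₀*B - b)^2
      = s^2*r₀^2*(A^2+B^2) - (s*r₀) * (2*(A*a+B*b)) + (a^2+b^2) := by ring
  rw [e1, hs2, hAB2, ← hd2]
  linarith

/-- In a `k`-set of closed disks (no point of the plane lies in more than `k` of the
disks), a disk of minimal radius is intersected by at most `7k` of the disks. -/
theorem smallest_disk_meets_at_most_seven_k (ι : Type*) [Fintype ι]
    (c : ι → Plane) (r : ι → ℝ) (hr : ∀ i, 0 ≤ r i) (k : ℕ)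
    (hk : ∀ z : Plane, {i : ι | z ∈ closedBall (c i) (r i)}.ncard ≤ k)
    (i₀ : ι) (hmin : ∀ i, r i₀ ≤ r i) :
    {i : ι | (closedBall (c i) (r i) ∩ closedBall (c i₀) (r i₀)).Nonempty}.ncard ≤ 7 * k := by
  classical
  set y : Plane := c i₀ with hy
  set r₀ : ℝ := r i₀ with hr₀
  have h0 : 0 ≤ r₀ := hr i₀
  set s : ℝ := Real.sqrt 3 with hsdef
  have hs0 : 0 ≤ s := Real.sqrt_nonneg 3
  have hs2 : s^2 = 3 := Real.sq_sqrt (by norm_num)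
  set T : Plane → Set ι := fun z => {i : ι | z ∈ closedBall (c i) (r i)} with hT
  set P : ℝ → ℝ → Plane := fun A B => mk2 (y 0 + s*r₀*A) (y 1 + s*r₀*B) with hP
  have hsub : {i : ι | (closedBall (c i) (r i) ∩ closedBall y r₀).Nonempty} ⊆
      T y ∪ T (P 1 0) ∪ T (P (1/2) (s/2)) ∪ T (P (-(1/2)) (s/2)) ∪ T (P (-1) 0) ∪
      T (P (-(1/2)) (-(s/2))) ∪ T (P (1/2) (-(s/2))) := by
    intro i hi
    obtain ⟨z, hz1, hz2⟩ := hi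
    have hdy : dist (c i) y ≤ r i + r₀ := by
      calc dist (c i) y ≤ dist (c i) z + dist z y := dist_triangle _ _ _
        _ ≤ r i + r₀ := add_le_add (by rwa [dist_comm, ← mem_closedBall]) hz2
    rcases le_total (dist (c i) y) (r i) with hcase | hcase
    · have : i ∈ T y := by
        simp only [hT, Set.mem_setOf_eq, mem_closedBall]
        rw [dist_comm]
        exact hcase
      simp only [Set.mem_union]; tauto
    · -- the disk i does not contain y; use one of the six outer points
      set a : ℝ := c i 0 - y 0 with hadef
      set b : ℝ := c i 1 - y 1 with hbdef
      set d : ℝ := dist (c i) y with hddef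
      have hd0 : 0 ≤ d := dist_nonneg
      have hd2 : d^2 = a^2 + b^2 := by
        rw [hddef, dist_mk2, Real.sq_sqrt (by positivity)]
      obtain ⟨A, B, hAB2, hAB, hcases⟩ := dir_aux s a b d hs0 hs2 hd0 hd2
      have hqmem : i ∈ T (P A B) := by
        simp only [hT, Set.mem_setOf_eq, mem_closedBall, dist_mk2]
        have hball := ball_ineq a b d (r i) r₀ A B s hs0 hs2 h0 (hmin i) hcase hdy hd2 hAB2 hAB
        have e : (P A B 0 - c i 0)^2 + (P A B 1 - c i 1)^2
            = (s*r₀*A - a)^2 + (s*r₀*B - b)^2 := by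
          show ((y 0 + s*r₀*A) - c i 0)^2 + ((y 1 + s*r₀*B) - c i 1)^2 = _
          rw [hadef, hbdef]; ring
        calc Real.sqrt ((P A B 0 - c i 0)^2 + (P A B 1 - c i 1)^2)
            ≤ Real.sqrt ((r i)^2) := Real.sqrt_le_sqrt (by rw [e]; exact hball)
          _ = r i := Real.sqrt_sq (hr i)
      simp only [Set.mem_union]
      rcases hcases with ⟨hA, hB⟩ | ⟨hA, hB⟩ | ⟨hA, hB⟩ | ⟨hA, hB⟩ | ⟨hA, hB⟩ | ⟨hA, hB⟩ <;>
        subst hA <;> subst hB <;> tauto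
  have hle := Set.ncard_le_ncard hsub (Set.toFinite _)
  have u1 := Set.ncard_union_le (T y ∪ T (P 1 0) ∪ T (P (1/2) (s/2)) ∪ T (P (-(1/2)) (s/2)) ∪
    T (P (-1) 0) ∪ T (P (-(1/2)) (-(s/2)))) (T (P (1/2) (-(s/2))))
  have u2 := Set.ncard_union_le (T y ∪ T (P 1 0) ∪ T (P (1/2) (s/2)) ∪ T (P (-(1/2)) (s/2)) ∪
    T (P (-1) 0)) (T (P (-(1/2)) (-(s/2))))
  have u3 := Set.ncard_union_le (T y ∪ T (P 1 0) ∪ T (P (1/2) (s/2)) ∪ T (P (-(1/2)) (s/2)))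
    (T (P (-1) 0))
  have u4 := Set.ncard_union_le (T y ∪ T (P 1 0) ∪ T (P (1/2) (s/2))) (T (P (-(1/2)) (s/2)))
  have u5 := Set.ncard_union_le (T y ∪ T (P 1 0)) (T (P (1/2) (s/2)))
  have u6 := Set.ncard_union_le (T y) (T (P 1 0))
  have b0 := hk y
  have b1 := hk (P 1 0)
  have b2 := hk (P (1/2) (s/2))
  have b3 := hk (P (-(1/2)) (s/2))
  have b4 := hk (P (-1) 0)
  have b5 := hk (P (-(1/2)) (-(s/2)))
  have b6 := hk (P (1/2) (-(s/2)))
  simp only [hT] at hle u1 u2 u3 u4 u5 u6 ⊢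
  omega
end
end

section
/- Let ι be a finite index set and let c : ι → ℝ², r : ι → ℝ with r i ≥ 0 for all i, such that the family of closed disks {closedBall(c i, r i)}_{i ∈ ι} is a 3-set, i.e. no point of ℝ² belongs to more than 3 of these disks. Let D = closedBall(c₀, r₀) be a further closed disk with 0 ≤ r₀ ≤ r i for every i ∈ ι. Then the number of indices i ∈ ι such that closedBall(c i, r i) ∩ D is nonempty is at most 28. (Applied with the edge-disks of the convex hull of P and a link-disk D, this says a link-disk is intersected by at most 28 edge-disks of radius at least its own.) -/
open Metric MeasureTheory ENNReal

noncomputable section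

lemma small_ball_exists {c₁ c₀ : Plane} {r₁ r₀ : ℝ} (hr₀ : 0 ≤ r₀) (h01 : r₀ ≤ r₁)
    (hne : (closedBall c₁ r₁ ∩ closedBall c₀ r₀).Nonempty) :
    ∃ c', dist c' c₀ ≤ 2 * r₀ ∧ closedBall c' r₀ ⊆ closedBall c₁ r₁ := by
  obtain ⟨z, hz1, hz0⟩ := hne
  rw [mem_closedBall] at hz1 hz0
  have hd : dist c₁ c₀ ≤ r₁ + r₀ := by
    calc dist c₁ c₀ ≤ dist c₁ z + dist z c₀ := dist_triangle _ _ _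
    _ ≤ r₁ + r₀ := by rw [dist_comm c₁ z]; linarith
  by_cases hcase : dist c₁ c₀ ≤ r₁ - r₀
  · refine ⟨c₀, by rw [dist_self]; linarith, closedBall_subset_closedBall' ?_⟩
    rw [dist_comm]; linarith
  · push_neg at hcase
    have hd0 : 0 < dist c₁ c₀ := lt_of_le_of_lt (by linarith) hcase
    set d := dist c₁ c₀ with hdd
    set t : ℝ := (r₁ - r₀) / d with htd
    have ht0 : 0 ≤ t := div_nonneg (by linarith) hd0.le
    have ht1 : t ≤ 1 := by rw [div_le_one hd0]; linarith
    have htd' : t * d = r₁ - r₀ := div_mul_cancel₀ _ hd0.ne'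
    refine ⟨c₁ + t • (c₀ - c₁), ?_, closedBall_subset_closedBall' ?_⟩
    · have heq : c₁ + t • (c₀ - c₁) - c₀ = (1 - t) • (c₁ - c₀) := by module
      rw [dist_eq_norm, heq, norm_smul, Real.norm_eq_abs, abs_of_nonneg (by linarith),
        ← dist_eq_norm]
      rw [← hdd]
      nlinarith
    · have h1 : dist (c₁ + t • (c₀ - c₁)) c₁ = t * d := by
        have heq : c₁ + t • (c₀ - c₁) - c₁ = t • (c₀ - c₁) := by module
        rw [dist_eq_norm, heq, norm_smul, Real.norm_eq_abs, abs_of_nonneg ht0,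
          ← dist_eq_norm, dist_comm, ← hdd]
      rw [h1, htd']
      linarith

/-- If a finite family of closed disks is a 3-set (no point of the plane lies in more
than 3 of the disks), then a further closed disk of radius at most the radius of every
disk of the family intersects at most 28 disks of the family. -/
theorem link_disk_meets_at_most_28_edge_disks (ι : Type*) [Fintype ι]
    (c : ι → Plane) (r : ι → ℝ) (hr : ∀ i, 0 ≤ r i)
    (h3 : ∀ z : Plane, {i : ι | z ∈ closedBall (c i) (r i)}.ncard ≤ 3)
    (c₀ : Plane) (r₀ : ℝ) (hr₀ : 0 ≤ r₀) (hmin : ∀ i, r₀ ≤ r i) :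
    {i : ι | (closedBall (c i) (r i) ∩ closedBall c₀ r₀).Nonempty}.ncard ≤ 28 := by
  classical
  set S : Finset ι := Finset.univ.filter
    (fun i => (closedBall (c i) (r i) ∩ closedBall c₀ r₀).Nonempty) with hS
  have hset : {i : ι | (closedBall (c i) (r i) ∩ closedBall c₀ r₀).Nonempty} = ↑S := by
    ext i; simp [hS]
  rw [hset, Set.ncard_coe_finset]
  rcases eq_or_lt_of_le hr₀ with h0 | h0
  · -- r₀ = 0 : every intersecting disk contains c₀
    have hsub : (S : Set ι) ⊆ {i | c₀ ∈ closedBall (c i) (r i)} := by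
      intro i hi
      simp only [hS, Finset.coe_filter, Finset.mem_univ, Set.mem_setOf_eq, true_and] at hi
      obtain ⟨z, hz1, hz0⟩ := hi
      have hz : z = c₀ := by
        rw [mem_closedBall, ← h0, dist_le_zero] at hz0; exact hz0
      exact Set.mem_setOf_eq ▸ (hz ▸ hz1)
    calc S.card = (S : Set ι).ncard := (Set.ncard_coe_finset S).symm
      _ ≤ {i | c₀ ∈ closedBall (c i) (r i)}.ncard :=
          Set.ncard_le_ncard hsub (Set.toFinite _)
      _ ≤ 3 := h3 c₀
      _ ≤ 28 := by norm_num
  · -- r₀ > 0 : area argument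
    have hch : ∀ i ∈ S, ∃ c', dist c' c₀ ≤ 2 * r₀ ∧
        closedBall c' r₀ ⊆ closedBall (c i) (r i) := by
      intro i hi
      simp only [hS, Finset.mem_filter, Finset.mem_univ, true_and] at hi
      exact small_ball_exists hr₀ (hmin i) hi
    choose! c' hc'd hc's using hch
    set K : Set Plane := closedBall c₀ (3 * r₀) with hK
    have hsubK : ∀ i ∈ S, closedBall (c' i) r₀ ⊆ K := by
      intro i hi
      exact closedBall_subset_closedBall' (by linarith [hc'd i hi])
    -- pointwise multiplicity bound
    have hpt : ∀ z : Plane, ∑ i ∈ S, (closedBall (c' i) r₀).indicator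
        (1 : Plane → ℝ≥0∞) z ≤ K.indicator (fun _ => 3) z := by
      intro z
      by_cases hzK : z ∈ K
      · rw [Set.indicator_of_mem hzK]
        set T : Finset ι := S.filter (fun i => z ∈ closedBall (c' i) r₀) with hT
        have hsum : ∑ i ∈ S, (closedBall (c' i) r₀).indicator (1 : Plane → ℝ≥0∞) z
            = (T.card : ℝ≥0∞) := by
          rw [hT, Finset.card_filter, Nat.cast_sum]
          refine Finset.sum_congr rfl fun i _ => ?_
          by_cases h : z ∈ closedBall (c' i) r₀ <;> simp [Set.indicator_apply, h]
        rw [hsum]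
        have hTle : T.card ≤ 3 := by
          have hsub2 : (T : Set ι) ⊆ {i | z ∈ closedBall (c i) (r i)} := by
            intro i hi
            simp only [hT, Finset.coe_filter, Set.mem_setOf_eq] at hi
            exact hc's i hi.1 hi.2
          calc T.card = (T : Set ι).ncard := (Set.ncard_coe_finset T).symm
            _ ≤ _ := Set.ncard_le_ncard hsub2 (Set.toFinite _)
            _ ≤ 3 := h3 z
        exact_mod_cast Nat.cast_le.mpr hTle
      · rw [Set.indicator_of_notMem hzK]
        refine le_of_eq (Finset.sum_eq_zero fun i hi => ?_)
        exact Set.indicator_of_notMem (fun h => hzK (hsubK i hi h)) _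
    -- integrate
    set V : ℝ≥0∞ := volume (ball (0 : Plane) 1) with hV
    have hV0 : V ≠ 0 := (measure_ball_pos volume 0 one_pos).ne'
    have hVt : V ≠ ⊤ := measure_ball_lt_top.ne
    have hfr : Module.finrank ℝ Plane = 2 := by simp [Plane]
    have hvol : ∀ x : Plane, ∀ s : ℝ, 0 ≤ s →
        volume (closedBall x s) = ENNReal.ofReal (s ^ 2) * V := by
      intro x s hs
      rw [Measure.addHaar_closedBall volume x hs, hfr]
    have hint : ∑ i ∈ S, volume (closedBall (c' i) r₀) ≤ 3 * volume K := by
      have h1 : ∑ i ∈ S, volume (closedBall (c' i) r₀)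
          = ∫⁻ z, ∑ i ∈ S, (closedBall (c' i) r₀).indicator (1 : Plane → ℝ≥0∞) z := by
        rw [lintegral_finset_sum]
        · exact Finset.sum_congr rfl fun i _ =>
            (lintegral_indicator_one measurableSet_closedBall).symm
        · exact fun i _ => measurable_one.indicator measurableSet_closedBall
      rw [h1]
      calc ∫⁻ z, ∑ i ∈ S, (closedBall (c' i) r₀).indicator (1 : Plane → ℝ≥0∞) z
          ≤ ∫⁻ z, K.indicator (fun _ => 3) z := lintegral_mono hpt
        _ = 3 * volume K := by
            rw [lintegral_indicator_const measurableSet_closedBall]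
    -- compute volumes
    have hvK : volume K = ENNReal.ofReal ((3 * r₀) ^ 2) * V := hvol _ _ (by linarith)
    have hvS : ∑ i ∈ S, volume (closedBall (c' i) r₀)
        = (S.card : ℝ≥0∞) * (ENNReal.ofReal (r₀ ^ 2) * V) := by
      rw [Finset.sum_congr rfl fun i _ => hvol (c' i) r₀ hr₀]
      rw [Finset.sum_const, nsmul_eq_mul]
    rw [hvS, hvK, ← mul_assoc, ← mul_assoc, ENNReal.mul_le_mul_iff_left hV0 hVt] at hint
    have h27 : (3 : ℝ≥0∞) * ENNReal.ofReal ((3 * r₀) ^ 2)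
        = (27 : ℝ≥0∞) * ENNReal.ofReal (r₀ ^ 2) := by
      rw [show (3 * r₀) ^ 2 = 9 * r₀ ^ 2 by ring, ENNReal.ofReal_mul (by norm_num)]
      rw [← mul_assoc]
      norm_num
    rw [h27] at hint
    have hr2 : ENNReal.ofReal (r₀ ^ 2) ≠ 0 := by
      simp only [ne_eq, ENNReal.ofReal_eq_zero, not_le]
      positivity
    have hr2t : ENNReal.ofReal (r₀ ^ 2) ≠ ⊤ := ENNReal.ofReal_ne_top
    rw [ENNReal.mul_le_mul_iff_left hr2 hr2t] at hint
    have : (S.card : ℝ≥0∞) ≤ ((27 : ℕ) : ℝ≥0∞) := by exact_mod_cast hint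
    have := Nat.cast_le.mp this
    omega
end
end

section
/- Let a, b, c, d ∈ ℝ² and θ ∈ ℝ, and set w = (cos θ, sin θ) and w⊥ = (−sin θ, cos θ). Suppose ⟨a − c, w⟩ ≥ 0 and ⟨b − d, w⊥⟩ ≥ 0, and consider the rectangle R(θ) = {z ∈ ℝ² : ⟨c, w⟩ ≤ ⟨z, w⟩ ≤ ⟨a, w⟩ and ⟨d, w⊥⟩ ≤ ⟨z, w⊥⟩ ≤ ⟨b, w⊥⟩}, which is isothetic with respect to the rotated axes. Then the Lebesgue area of R(θ) equals ⟨a − c, w⟩·⟨b − d, w⊥⟩; moreover, writing a − c = (x₁, y₁) and b − d = (x₂, y₂), one has ⟨a − c, w⟩·⟨b − d, w⊥⟩ = (x₁y₂ − y₁x₂)/2 + ((x₁y₂ + y₁x₂)/2)·cos 2θ + ((y₁y₂ − x₁x₂)/2)·sin 2θ for all θ, so the area of the overlapping region is of the form c₀ + c₁·cos 2θ + c₂·sin 2θ for constants c₀, c₁, c₂ depending only on the four supporting points. -/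
open scoped RealInnerProductSpace

noncomputable section

/-- The unit vector `w_θ⊥ = (−sin θ, cos θ)`. -/
def wperp (θ : ℝ) : Plane := WithLp.toLp 2 ![-Real.sin θ, Real.cos θ]

/-! In the orthonormal basis `(w_θ, w_θ⊥)` the region is the coordinate box
`[⟪c, w_θ⟫, ⟪a, w_θ⟫] × [⟪d, w_θ⊥⟫, ⟪b, w_θ⊥⟫]`, and taking coordinates in an orthonormal basis
preserves Lebesgue measure, so the area is the product of the side lengths. Expanding that
product with the double-angle formulas gives the sinusoidal form. -/

open MeasureTheory Real Set

theorem OrthonormalBasis.volume_setOf_inner_mem_Icc {ι F : Type*} [Fintype ι]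
    [NormedAddCommGroup F] [InnerProductSpace ℝ F] [FiniteDimensional ℝ F]
    [MeasurableSpace F] [BorelSpace F] (b : OrthonormalBasis ι ℝ F) (p q : ι → ℝ) :
    volume {z : F | ∀ i, ⟪b i, z⟫ ∈ Icc (p i) (q i)} = ∏ i, ENNReal.ofReal (q i - p i) := by
  have hmp := (EuclideanSpace.volume_preserving_symm_measurableEquiv_toLp ι).comp
    b.measurePreserving_measurableEquiv
  rw [← volume_Icc_pi, ← hmp.measure_preimage measurableSet_Icc.nullMeasurableSet]
  congr 1
  ext z
  simp [Pi.le_def, forall_and, OrthonormalBasis.measurableEquiv, b.repr_apply_apply]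

lemma inner_wdir_s14 (z : Plane) (θ : ℝ) : ⟪z, wdir θ⟫ = z 0 * cos θ + z 1 * sin θ := by
  simp [wdir, PiLp.inner_apply, Fin.sum_univ_two, mul_comm]

lemma inner_wperp (z : Plane) (θ : ℝ) : ⟪z, wperp θ⟫ = z 1 * cos θ - z 0 * sin θ := by
  simp [wperp, PiLp.inner_apply, Fin.sum_univ_two, mul_comm]
  ring

lemma orthonormal_wdir_wperp (θ : ℝ) : Orthonormal ℝ ![wdir θ, wperp θ] := by
  rw [orthonormal_iff_ite]
  intro i j
  fin_cases i <;> fin_cases j <;>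
    simp only [Fin.zero_eta, Fin.mk_one, Matrix.cons_val_zero, Matrix.cons_val_one, inner_wdir_s14,
      inner_wperp] <;> simp [wdir, wperp, ← sq, mul_comm]

def rotatedBasis (θ : ℝ) : OrthonormalBasis (Fin 2) ℝ Plane :=
  (basisOfOrthonormalOfCardEqFinrank (orthonormal_wdir_wperp θ) (by simp)).toOrthonormalBasis
    (by rw [coe_basisOfOrthonormalOfCardEqFinrank]; exact orthonormal_wdir_wperp θ)

lemma coe_rotatedBasis (θ : ℝ) : ⇑(rotatedBasis θ) = ![wdir θ, wperp θ] := by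
  rw [rotatedBasis, Module.Basis.coe_toOrthonormalBasis, coe_basisOfOrthonormalOfCardEqFinrank]

lemma inner_wdir_mul_inner_wperp (u v : Plane) (θ : ℝ) :
    ⟪u, wdir θ⟫ * ⟪v, wperp θ⟫ =
      (u 0 * v 1 - u 1 * v 0) / 2 + ((u 0 * v 1 + u 1 * v 0) / 2) * cos (2 * θ) +
        ((u 1 * v 1 - u 0 * v 0) / 2) * sin (2 * θ) := by
  rw [inner_wdir_s14, inner_wperp, cos_two_mul, sin_two_mul]
  linear_combination (-u 1 * v 0) * sin_sq_add_cos_sq θ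

theorem overlap_rectangle_area_form_general (a b c d : Plane) (θ : ℝ)
    (h₁ : 0 ≤ ⟪a - c, wdir θ⟫) :
    MeasureTheory.volume
        {z : Plane | (⟪c, wdir θ⟫ ≤ ⟪z, wdir θ⟫ ∧ ⟪z, wdir θ⟫ ≤ ⟪a, wdir θ⟫) ∧
          (⟪d, wperp θ⟫ ≤ ⟪z, wperp θ⟫ ∧ ⟪z, wperp θ⟫ ≤ ⟪b, wperp θ⟫)} =
      ENNReal.ofReal (⟪a - c, wdir θ⟫ * ⟪b - d, wperp θ⟫) ∧
    ⟪a - c, wdir θ⟫ * ⟪b - d, wperp θ⟫ =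
      ((a - c) 0 * (b - d) 1 - (a - c) 1 * (b - d) 0) / 2 +
        (((a - c) 0 * (b - d) 1 + (a - c) 1 * (b - d) 0) / 2) * Real.cos (2 * θ) +
        (((a - c) 1 * (b - d) 1 - (a - c) 0 * (b - d) 0) / 2) * Real.sin (2 * θ) := by
  refine ⟨?_, inner_wdir_mul_inner_wperp _ _ θ⟩
  have hbox := (rotatedBasis θ).volume_setOf_inner_mem_Icc ![⟪c, wdir θ⟫, ⟪d, wperp θ⟫]
    ![⟪a, wdir θ⟫, ⟪b, wperp θ⟫]
  simp only [Fin.forall_fin_two, Fin.prod_univ_two, coe_rotatedBasis, real_inner_comm _ (wdir θ),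
    real_inner_comm _ (wperp θ), Matrix.cons_val_zero, Matrix.cons_val_one, mem_Icc] at hbox
  rw [hbox, ENNReal.ofReal_mul h₁, inner_sub_left, inner_sub_left]

/-- The area of the overlapping region of two opposite extremal θ-quadrants: the
rectangle, isothetic with respect to the rotated axes and determined by the supporting
points `a, b, c, d`, has area `⟪a−c, w_θ⟫·⟪b−d, w_θ⊥⟫`, and this product has the
sinusoidal form `c₀ + c₁·cos 2θ + c₂·sin 2θ`. -/
theorem overlap_rectangle_area_form (a b c d : Plane) (θ : ℝ)
    (h₁ : 0 ≤ ⟪a - c, wdir θ⟫) (h₂ : 0 ≤ ⟪b - d, wperp θ⟫) :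
    MeasureTheory.volume
        {z : Plane | (⟪c, wdir θ⟫ ≤ ⟪z, wdir θ⟫ ∧ ⟪z, wdir θ⟫ ≤ ⟪a, wdir θ⟫) ∧
          (⟪d, wperp θ⟫ ≤ ⟪z, wperp θ⟫ ∧ ⟪z, wperp θ⟫ ≤ ⟪b, wperp θ⟫)} =
      ENNReal.ofReal (⟪a - c, wdir θ⟫ * ⟪b - d, wperp θ⟫) ∧
    ⟪a - c, wdir θ⟫ * ⟪b - d, wperp θ⟫ =
      ((a - c) 0 * (b - d) 1 - (a - c) 1 * (b - d) 0) / 2 +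
        (((a - c) 0 * (b - d) 1 + (a - c) 1 * (b - d) 0) / 2) * Real.cos (2 * θ) +
        (((a - c) 1 * (b - d) 1 - (a - c) 0 * (b - d) 0) / 2) * Real.sin (2 * θ) :=
  overlap_rectangle_area_form_general a b c d θ h₁
end
end
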